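/- The persistence-sphere map is injective: if μ, ν are integrable positive measures on X and S(μ) = S(ν) as functions on the unit sphere S², then μ = ν. (Key step: if μ − ν = (π_Δ)_#(ν − μ) as signed measures, then since the two sides are supported on the disjoint sets X and Δ, both vanish, so μ = ν.) -/

import Mathlib

open MeasureTheory

/-- The inner product of `ℝ³ = ℝ × ℝ × ℝ`. -/
noncomputable def inner3 (v a : ℝ × ℝ × ℝ) : ℝ :=
  v.1 * a.1 + v.2.1 * a.2.1 + v.2.2 * a.2.2

/-- The lift of a planar point: `(1, p) ∈ ℝ³`. -/
def lift (p : ℝ × ℝ) : ℝ × ℝ × ℝ := (1, p.1, p.2)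

/-- The diagonal projection `π_Δ(x,y) = ((x+y)/2, (x+y)/2)`. -/
noncomputable def piD (p : ℝ × ℝ) : ℝ × ℝ := ((p.1 + p.2) / 2, (p.1 + p.2) / 2)

/-- The Euclidean norm of a point of `ℝ²`. -/
noncomputable def enorm2 (p : ℝ × ℝ) : ℝ := Real.sqrt (p.1 ^ 2 + p.2 ^ 2)

/-- The (positive) lift-zonoid transform of a measure. -/
noncomputable def LZT (η : Measure (ℝ × ℝ)) (v : ℝ × ℝ × ℝ) : ℝ :=
  ∫ p, max 0 (inner3 v (lift p)) ∂η

/-- The persistence sphere of `μ`: `S(μ)(v) = Λ(μ − (π_Δ)_#μ)(v)`. -/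
noncomputable def PSph (μ : Measure (ℝ × ℝ)) (v : ℝ × ℝ × ℝ) : ℝ :=
  LZT μ v - LZT (μ.map piD) v

/-!
Since `S(μ) = Λ(μ) − Λ((π_Δ)_#μ)` and `Λ` is additive on integrable measures, `S(μ) = S(ν)`
rearranges to `Λ(μ + (π_Δ)_#ν) = Λ(ν + (π_Δ)_#μ)`; both sides are positively homogeneous, so
agreement on `S²` gives agreement on all of `ℝ³`. Injectivity of `Λ` yields
`μ + (π_Δ)_#ν = ν + (π_Δ)_#μ`, and restricting to `X` kills the pushforwards, which live on the
diagonal `Δ`, leaving `μ = ν`.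
-/

section KeyStep

variable {α β : Type*} [MeasurableSpace α] [MeasurableSpace β]

lemma restrict_map_eq_zero_of_forall_notMem {f : α → β} (hf : Measurable f) {X : Set β}
    (hX : MeasurableSet X) (hfX : ∀ a, f a ∉ X) (η : Measure α) :
    (η.map f).restrict X = 0 := by
  have hpre : f ⁻¹' X = ∅ := Set.eq_empty_of_forall_notMem hfX
  rw [Measure.restrict_eq_zero, Measure.map_apply hf hX, hpre, measure_empty]

lemma eq_of_add_map_eq_add_map {f : α → α} (hf : Measurable f) {X : Set α}
    (hX : MeasurableSet X) (hfX : ∀ a, f a ∉ X) {μ ν : Measure α}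
    (hμX : ∀ᵐ a ∂μ, a ∈ X) (hνX : ∀ᵐ a ∂ν, a ∈ X) (h : μ + ν.map f = ν + μ.map f) :
    μ = ν := by
  have hres := congrArg (·.restrict X) h
  simpa only [Measure.restrict_add, restrict_map_eq_zero_of_forall_notMem hf hX hfX, add_zero,
    Measure.restrict_eq_self_of_ae_mem hμX, Measure.restrict_eq_self_of_ae_mem hνX] using hres

end KeyStep

lemma eq_of_eq_on_unitSphere {f g : ℝ × ℝ × ℝ → ℝ}
    (hf : ∀ c : ℝ, 0 ≤ c → ∀ v, f (c • v) = c * f v)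
    (hg : ∀ c : ℝ, 0 ≤ c → ∀ v, g (c • v) = c * g v)
    (h : ∀ v : ℝ × ℝ × ℝ, v.1 ^ 2 + v.2.1 ^ 2 + v.2.2 ^ 2 = 1 → f v = g v) : f = g := by
  funext v
  by_cases hv : v = 0
  · subst hv
    have hf0 : f 0 = 0 := by simpa using hf 0 le_rfl 0
    have hg0 : g 0 = 0 := by simpa using hg 0 le_rfl 0
    rw [hf0, hg0]
  set s := v.1 ^ 2 + v.2.1 ^ 2 + v.2.2 ^ 2
  have hs : 0 < s := by
    by_contra! hle
    refine hv (Prod.ext ?_ (Prod.ext ?_ ?_)) <;> refine (pow_eq_zero_iff two_ne_zero).1 ?_ <;>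
      nlinarith [sq_nonneg v.1, sq_nonneg v.2.1, sq_nonneg v.2.2]
  set r := √s
  have hr : 0 < r := Real.sqrt_pos.2 hs
  have hrv : v = r • (r⁻¹ • v) := by rw [smul_smul, mul_inv_cancel₀ hr.ne', one_smul]
  have hunit : (r⁻¹ • v).1 ^ 2 + (r⁻¹ • v).2.1 ^ 2 + (r⁻¹ • v).2.2 ^ 2 = 1 := by
    have hr2 : r ^ 2 = s := Real.sq_sqrt hs.le
    simp only [Prod.smul_fst, Prod.smul_snd, smul_eq_mul]
    field_simp
    linarith
  rw [hrv, hf r hr.le, hg r hr.le, h _ hunit]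

lemma continuous_enorm2 : Continuous enorm2 := by
  unfold enorm2; fun_prop

lemma measurable_piD : Measurable piD := by
  unfold piD; fun_prop

lemma enorm2_piD_le (p : ℝ × ℝ) : enorm2 (piD p) ≤ enorm2 p :=
  Real.sqrt_le_sqrt (by simp only [piD]; nlinarith [sq_nonneg (p.1 - p.2)])

lemma lintegral_enorm2_map_piD_lt_top {η : Measure (ℝ × ℝ)}
    (h : ∫⁻ p, ENNReal.ofReal (enorm2 p) ∂η < ⊤) :
    ∫⁻ p, ENNReal.ofReal (enorm2 p) ∂(η.map piD) < ⊤ := by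
  rw [lintegral_map continuous_enorm2.measurable.ennreal_ofReal measurable_piD]
  exact (lintegral_mono fun p ↦ ENNReal.ofReal_le_ofReal (enorm2_piD_le p)).trans_lt h

lemma integrable_enorm2 {η : Measure (ℝ × ℝ)} (h : ∫⁻ p, ENNReal.ofReal (enorm2 p) ∂η < ⊤) :
    Integrable enorm2 η :=
  ⟨continuous_enorm2.aestronglyMeasurable,
    (hasFiniteIntegral_iff_ofReal (.of_forall fun _ ↦ Real.sqrt_nonneg _)).2 h⟩

lemma integrable_max_zero_inner3_lift {η : Measure (ℝ × ℝ)} [IsFiniteMeasure η]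
    (h : ∫⁻ p, ENNReal.ofReal (enorm2 p) ∂η < ⊤) (v : ℝ × ℝ × ℝ) :
    Integrable (fun p ↦ max 0 (inner3 v (lift p))) η := by
  have hnorm := integrable_enorm2 h
  have hfst : Integrable Prod.fst η := hnorm.mono' measurable_fst.aestronglyMeasurable
    (.of_forall fun p ↦ Real.abs_le_sqrt (by nlinarith [sq_nonneg p.2]))
  have hsnd : Integrable Prod.snd η := hnorm.mono' measurable_snd.aestronglyMeasurable
    (.of_forall fun p ↦ Real.abs_le_sqrt (by nlinarith [sq_nonneg p.1]))
  have hinner : Integrable (fun p ↦ inner3 v (lift p)) η := by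
    have hexp : (fun p ↦ inner3 v (lift p)) = fun p ↦ v.1 + (v.2.1 * p.1 + v.2.2 * p.2) := by
      funext p; simp only [inner3, lift, mul_one, add_assoc]
    rw [hexp]
    exact (integrable_const _).add ((hfst.const_mul _).add (hsnd.const_mul _))
  exact (integrable_zero _ _ η).sup hinner

lemma LZT_add_measure {η₁ η₂ : Measure (ℝ × ℝ)} [IsFiniteMeasure η₁] [IsFiniteMeasure η₂]
    (h₁ : ∫⁻ p, ENNReal.ofReal (enorm2 p) ∂η₁ < ⊤)
    (h₂ : ∫⁻ p, ENNReal.ofReal (enorm2 p) ∂η₂ < ⊤) (v : ℝ × ℝ × ℝ) :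
    LZT (η₁ + η₂) v = LZT η₁ v + LZT η₂ v :=
  integral_add_measure (integrable_max_zero_inner3_lift h₁ v)
    (integrable_max_zero_inner3_lift h₂ v)

lemma LZT_smul (η : Measure (ℝ × ℝ)) {c : ℝ} (hc : 0 ≤ c) (v : ℝ × ℝ × ℝ) :
    LZT η (c • v) = c * LZT η v := by
  rw [LZT, LZT, ← integral_const_mul]
  congr 1; funext p
  have hlin : inner3 (c • v) (lift p) = c * inner3 v (lift p) := by
    simp only [inner3, lift, Prod.smul_fst, Prod.smul_snd, smul_eq_mul]; ring
  rw [hlin, mul_max_of_nonneg _ _ hc, mul_zero]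

lemma PSph_smul (η : Measure (ℝ × ℝ)) {c : ℝ} (hc : 0 ≤ c) (v : ℝ × ℝ × ℝ) :
    PSph η (c • v) = c * PSph η v := by
  rw [PSph, PSph, LZT_smul _ hc, LZT_smul _ hc, mul_sub]

/-- Injectivity of the persistence-sphere map: assuming injectivity of the lift-zonoid
transform on positive integrable measures, if `μ, ν` are integrable positive measures on
`X = {x < y}` and `S(μ) = S(ν)` on the unit sphere `S² ⊂ ℝ³`, then `μ = ν`. -/
theorem persistenceSphere_injective
    (hinj : ∀ η₁ η₂ : Measure (ℝ × ℝ), IsFiniteMeasure η₁ → IsFiniteMeasure η₂ →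
      (∫⁻ p, ENNReal.ofReal (enorm2 p) ∂η₁ < ⊤) →
      (∫⁻ p, ENNReal.ofReal (enorm2 p) ∂η₂ < ⊤) →
      (∀ v : ℝ × ℝ × ℝ, LZT η₁ v = LZT η₂ v) → η₁ = η₂)
    (μ ν : Measure (ℝ × ℝ)) (hμfin : IsFiniteMeasure μ) (hνfin : IsFiniteMeasure ν)
    (hμX : μ {p : ℝ × ℝ | ¬ p.1 < p.2} = 0) (hνX : ν {p : ℝ × ℝ | ¬ p.1 < p.2} = 0)
    (hμint : ∫⁻ p, ENNReal.ofReal (enorm2 p) ∂μ < ⊤)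
    (hνint : ∫⁻ p, ENNReal.ofReal (enorm2 p) ∂ν < ⊤)
    (hS : ∀ v : ℝ × ℝ × ℝ, v.1 ^ 2 + v.2.1 ^ 2 + v.2.2 ^ 2 = 1 →
      PSph μ v = PSph ν v) :
    μ = ν := by
  have := hμfin
  have := hνfin
  have hS' : PSph μ = PSph ν :=
    eq_of_eq_on_unitSphere (fun _ hc ↦ PSph_smul μ hc) (fun _ hc ↦ PSph_smul ν hc) hS
  have hμD := lintegral_enorm2_map_piD_lt_top hμint
  have hνD := lintegral_enorm2_map_piD_lt_top hνint
  have hLZT : ∀ v, LZT (μ + ν.map piD) v = LZT (ν + μ.map piD) v := by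
    intro v
    have hv := congrFun hS' v
    rw [PSph, PSph] at hv
    rw [LZT_add_measure hμint hνD, LZT_add_measure hνint hμD]
    linarith
  have hsum : μ + ν.map piD = ν + μ.map piD :=
    hinj _ _ inferInstance inferInstance
      (by rw [lintegral_add_measure]; exact ENNReal.add_lt_top.2 ⟨hμint, hνD⟩)
      (by rw [lintegral_add_measure]; exact ENNReal.add_lt_top.2 ⟨hνint, hμD⟩) hLZT
  exact eq_of_add_map_eq_add_map measurable_piD (measurableSet_lt measurable_fst measurable_snd)
    (fun p ↦ lt_irrefl ((p.1 + p.2) / 2)) (ae_iff.2 hμX) (ae_iff.2 hνX) hsum
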